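/- arXiv:2002.08597 — 2 statements merged into one kernel-verified Lean document; each statement's English description precedes it below -/
import Mathlib

section
/- Let m_x, m_y ∈ ℝ, σ_x > 0, s_y > 0 and c ∈ ℝ with c² < σ_x² s_y², and let f be the bivariate Gaussian density on ℝ² with mean (m_x, m_y) and covariance matrix [[σ_x², c],[c, s_y²]]. Fix a ∈ ℝ, set a* = (a − m_y)/s_y and λ = φ(a*)/Φ(a*), and let μ̂ = (1/Φ(a*)) ∫_{ℝ×(-∞,a]} x f(x,y) d(x,y). Then (1/Φ(a*)) ∫_{ℝ×(-∞,a]} x² f(x,y) d(x,y) − μ̂² = σ_x² − (c²/s_y²)·(a*·λ + λ²); that is, the conditional variance of X given Y ≤ a equals σ_x² − (c²/s_y²)(a* φ(a*)/Φ(a*) + (φ(a*)/Φ(a*))²). -/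
/-!
Given `Y = y`, the first coordinate of the bivariate Gaussian is Gaussian with mean
`m_x + (c / s_y²)(y - m_y)` and variance `σ_x² - c² / s_y²`, so the joint density is the
product of this conditional density and the marginal density of `Y`. Integrating `x` and `x²`
against the conditional density first (Fubini) turns both censored moments into integrals over
`y ≤ a` of a quadratic polynomial in `y - m_y` against the marginal density. Since the Gaussian
density `g` satisfies `g' = -(y - m_y) / s_y² · g`, such an integral is computed by one
integration by parts, which produces exactly the terms `Φ(a*)` and `φ(a*)`.
-/

open MeasureTheory Real Matrix

/-- The standard normal probability density function. -/
noncomputable def stdPdf (t : ℝ) : ℝ := (Real.sqrt (2 * Real.pi))⁻¹ * Real.exp (-t ^ 2 / 2)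

/-- The standard normal cumulative distribution function. -/
noncomputable def stdCdf (t : ℝ) : ℝ := ∫ u in Set.Iic t, stdPdf u

/-- The Gaussian density on `ℝᵈ` with mean `μ` and covariance matrix `S`. -/
noncomputable def gaussDensity {d : ℕ} (μ : Fin d → ℝ) (S : Matrix (Fin d) (Fin d) ℝ)
    (z : Fin d → ℝ) : ℝ :=
  (Real.sqrt ((2 * Real.pi) ^ d * S.det))⁻¹ *
    Real.exp (-(1 / 2) * ((z - μ) ⬝ᵥ (S⁻¹ *ᵥ (z - μ))))

open Set Filter Topology ProbabilityTheory NNReal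

section GaussianPDF

variable {μ : ℝ} {v : ℝ≥0}

lemma hasDerivAt_gaussianPDFReal (x : ℝ) :
    HasDerivAt (gaussianPDFReal μ v) (-(x - μ) / v * gaussianPDFReal μ v x) x := by
  have h : HasDerivAt (fun y => -(y - μ) ^ 2 / (2 * (v : ℝ))) (-(x - μ) / v) x := by
    refine ((((hasDerivAt_id x).sub_const μ).pow 2).neg.div_const _).congr_deriv ?_
    simp only [id]
    ring
  refine (h.exp.const_mul (√(2 * π * v))⁻¹).congr_deriv ?_
  simp only [gaussianPDFReal]
  ring

lemma integrable_gaussianReal_iff (hv : v ≠ 0) {g : ℝ → ℝ} :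
    Integrable g (gaussianReal μ v) ↔ Integrable (fun x => g x * gaussianPDFReal μ v x) := by
  rw [gaussianReal_of_var_ne_zero _ hv, integrable_withDensity_iff_integrable_smul'
    (measurable_gaussianPDF μ v) (ae_of_all _ fun _ => gaussianPDF_lt_top)]
  simp only [toReal_gaussianPDF, smul_eq_mul, mul_comm]

lemma integrable_pow_mul_gaussianPDFReal (n : ℕ) :
    Integrable (fun x => x ^ n * gaussianPDFReal μ v x) := by
  rcases eq_or_ne v 0 with rfl | hv
  · simp
  rw [← integrable_gaussianReal_iff hv, ← integrable_norm_iff (by fun_prop)]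
  have h : MemLp id n (gaussianReal μ v) := by simpa using memLp_id_gaussianReal n
  simpa using h.integrable_norm_pow'

lemma integrable_sub_pow_mul_gaussianPDFReal (n : ℕ) :
    Integrable (fun x => (x - μ) ^ n * gaussianPDFReal μ v x) := by
  simpa [gaussianPDFReal_sub] using
    (integrable_pow_mul_gaussianPDFReal (μ := 0) (v := v) n).comp_sub_right μ

lemma integrable_quadratic_mul_gaussianPDFReal (α β γ : ℝ) :
    Integrable (fun x => (α + β * (x - μ) + γ * (x - μ) ^ 2) * gaussianPDFReal μ v x) := by
  have h := (((integrable_sub_pow_mul_gaussianPDFReal (μ := μ) (v := v) 0).const_mul α).add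
    ((integrable_sub_pow_mul_gaussianPDFReal (μ := μ) (v := v) 1).const_mul β)).add
    ((integrable_sub_pow_mul_gaussianPDFReal (μ := μ) (v := v) 2).const_mul γ)
  refine h.congr (ae_of_all _ fun x => ?_)
  simp only [Pi.add_apply]
  ring

lemma integral_mul_gaussianPDFReal (hv : v ≠ 0) :
    ∫ x, x * gaussianPDFReal μ v x = μ := by
  simp_rw [mul_comm _ (gaussianPDFReal μ v _), ← smul_eq_mul,
    ← integral_gaussianReal_eq_integral_smul hv, integral_id_gaussianReal]

lemma integral_sq_mul_gaussianPDFReal (hv : v ≠ 0) :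
    ∫ x, x ^ 2 * gaussianPDFReal μ v x = v + μ ^ 2 := by
  have h := variance_eq_sub (memLp_id_gaussianReal (μ := μ) (v := v) 2)
  rw [variance_id_gaussianReal, integral_gaussianReal_eq_integral_smul hv] at h
  simp only [id, integral_id_gaussianReal, Pi.pow_apply, smul_eq_mul] at h
  simp_rw [mul_comm _ (gaussianPDFReal μ v _)]
  linarith

lemma integral_one_add_sq_mul_gaussianPDFReal (hv : v ≠ 0) :
    ∫ x, (1 + x ^ 2) * gaussianPDFReal μ v x = 1 + v + μ ^ 2 := by
  simp_rw [add_mul, one_mul]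
  rw [integral_add (integrable_gaussianPDFReal μ v) (integrable_pow_mul_gaussianPDFReal 2),
    integral_gaussianPDFReal_eq_one μ hv, integral_sq_mul_gaussianPDFReal hv, add_assoc]

lemma setIntegral_quadratic_mul_gaussianPDFReal_Iic (hv : v ≠ 0) (α β γ a : ℝ) :
    ∫ x in Iic a, (α + β * (x - μ) + γ * (x - μ) ^ 2) * gaussianPDFReal μ v x
      = (α + γ * v) * (∫ x in Iic a, gaussianPDFReal μ v x)
        - v * (β + γ * (a - μ)) * gaussianPDFReal μ v a := by
  -- `F` is an antiderivative of the integrand minus `(α + γ v)` times the density, and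
  -- vanishes at `-∞`.
  set F : ℝ → ℝ := fun x => -v * (β + γ * (x - μ)) * gaussianPDFReal μ v x
  set F' : ℝ → ℝ := fun x =>
    (-γ * v + β * (x - μ) + γ * (x - μ) ^ 2) * gaussianPDFReal μ v x
  have hF : ∀ x, HasDerivAt F (F' x) x := fun x => by
    have hlin : HasDerivAt (fun x => -v * (β + γ * (x - μ))) (-v * γ) x := by
      simpa using
        ((((hasDerivAt_id x).sub_const μ).const_mul γ).const_add β).const_mul (-(v : ℝ))
    refine (hlin.mul (hasDerivAt_gaussianPDFReal x)).congr_deriv ?_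
    field_simp
    ring
  have hF'int : Integrable F' := integrable_quadratic_mul_gaussianPDFReal _ _ _
  have hFint : Integrable F :=
    (integrable_quadratic_mul_gaussianPDFReal (μ := μ) (v := v) (-v * β) (-v * γ) 0).congr
      (ae_of_all _ fun x => by simp only [F]; ring)
  have hFlim : Tendsto F atBot (𝓝 0) :=
    tendsto_zero_of_hasDerivAt_of_integrableOn_Iic (a := a) (fun x _ => hF x)
      hF'int.integrableOn hFint.integrableOn
  have hsplit : ∀ x, (α + β * (x - μ) + γ * (x - μ) ^ 2) * gaussianPDFReal μ v x
      = (α + γ * v) * gaussianPDFReal μ v x + F' x := fun x => by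
    simp only [F']
    ring
  simp_rw [hsplit]
  rw [integral_add ((integrable_gaussianPDFReal μ v).const_mul _).integrableOn hF'int.integrableOn,
    integral_const_mul,
    integral_Iic_of_hasDerivAt_of_tendsto' (fun x _ => hF x) hF'int.integrableOn hFlim]
  simp only [F]
  ring

end GaussianPDF

section StandardNormal

lemma stdPdf_eq_gaussianPDFReal : stdPdf = gaussianPDFReal 0 1 := by
  ext t
  simp [stdPdf, gaussianPDFReal]

lemma stdCdf_pos (t : ℝ) : 0 < stdCdf t := by
  rw [stdCdf, stdPdf_eq_gaussianPDFReal, ← ENNReal.ofReal_pos,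
    ← gaussianReal_apply_eq_integral 0 one_ne_zero, pos_iff_ne_zero]
  intro h
  simpa using gaussianReal_absolutelyContinuous' 0 one_ne_zero h

variable {s μ : ℝ}

lemma gaussianPDFReal_eq_stdPdf (hs : 0 < s) (x : ℝ) :
    gaussianPDFReal μ (s ^ 2).toNNReal x = stdPdf ((x - μ) / s) / s := by
  rw [gaussianPDFReal, stdPdf, Real.coe_toNNReal _ (sq_nonneg s),
    show 2 * π * s ^ 2 = s ^ 2 * (2 * π) by ring, Real.sqrt_mul (sq_nonneg s), Real.sqrt_sq hs.le]
  field_simp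

lemma setIntegral_gaussianPDFReal_Iic (hs : 0 < s) (a : ℝ) :
    ∫ x in Iic a, gaussianPDFReal μ (s ^ 2).toNNReal x = stdCdf ((a - μ) / s) := by
  set G := fun u => (Iic ((a - μ) / s)).indicator stdPdf u
  have hG : ∀ x, (Iic a).indicator (gaussianPDFReal μ (s ^ 2).toNNReal) x
      = s⁻¹ * G ((x - μ) / s) := fun x => by
    have hmem : x ∈ Iic a ↔ (x - μ) / s ∈ Iic ((a - μ) / s) := by
      rw [mem_Iic, mem_Iic, div_le_div_iff_of_pos_right hs, sub_le_sub_iff_right]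
    by_cases hx : x ∈ Iic a
    · rw [indicator_of_mem hx, gaussianPDFReal_eq_stdPdf hs, div_eq_inv_mul]
      simp only [G, indicator_of_mem (hmem.1 hx)]
    · rw [indicator_of_notMem hx]
      simp only [G, indicator_of_notMem (mt hmem.2 hx), mul_zero]
  rw [← integral_indicator measurableSet_Iic, stdCdf, ← integral_indicator measurableSet_Iic]
  simp_rw [hG]
  rw [integral_const_mul, integral_sub_right_eq_self (fun x => G (x / s)),
    Measure.integral_comp_div, abs_of_pos hs, smul_eq_mul, inv_mul_cancel_left₀ hs.ne']

lemma setIntegral_quadratic_mul_gaussianPDFReal_Iic_eq_std (hs : 0 < s) (α β γ a : ℝ) :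
    ∫ x in Iic a, (α + β * (x - μ) + γ * (x - μ) ^ 2) * gaussianPDFReal μ (s ^ 2).toNNReal x
      = (α + γ * s ^ 2) * stdCdf ((a - μ) / s)
        - s * (β + γ * s * ((a - μ) / s)) * stdPdf ((a - μ) / s) := by
  rw [setIntegral_quadratic_mul_gaussianPDFReal_Iic (by simpa using hs.ne'),
    setIntegral_gaussianPDFReal_Iic hs, gaussianPDFReal_eq_stdPdf hs,
    Real.coe_toNNReal _ (sq_nonneg s)]
  field_simp

end StandardNormal

section ConditionalFubini

variable {ν : Measure ℝ} [SFinite ν] {v : ℝ≥0} {m q : ℝ → ℝ}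

lemma integrable_one_add_sq_mul_gaussianPDFReal_prod (hv : v ≠ 0) (hm : Measurable m)
    (hq : Measurable q) (hq_nonneg : 0 ≤ q)
    (hint : Integrable (fun y => (1 + v + m y ^ 2) * q y) ν) :
    Integrable (fun p : ℝ × ℝ => (1 + p.1 ^ 2) * (gaussianPDFReal (m p.2) v p.1 * q p.2))
      (volume.prod ν) := by
  refine (integrable_prod_iff' (by fun_prop)).2 ⟨ae_of_all _ fun y => ?_, hint.congr ?_⟩
  · simp_rw [← mul_assoc, add_mul _ _ (gaussianPDFReal _ _ _), one_mul]
    exact ((integrable_gaussianPDFReal _ v).add (integrable_pow_mul_gaussianPDFReal 2)).mul_const _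
  · refine ae_of_all _ fun y => ?_
    have hnonneg : ∀ x : ℝ, 0 ≤ (1 + x ^ 2) * (gaussianPDFReal (m y) v x * q y) := fun x =>
      mul_nonneg (by positivity) (mul_nonneg (gaussianPDFReal_nonneg _ _ _) (hq_nonneg y))
    simp_rw [Real.norm_of_nonneg (hnonneg _), ← mul_assoc, integral_mul_const,
      integral_one_add_sq_mul_gaussianPDFReal hv]

lemma integral_prod_mul_gaussianPDFReal (hv : v ≠ 0) (hm : Measurable m)
    (hq : Measurable q) (hq_nonneg : 0 ≤ q)
    (hint : Integrable (fun y => (1 + v + m y ^ 2) * q y) ν)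
    {g : ℝ → ℝ} (hg : Measurable g) (hg_le : ∀ x, |g x| ≤ 1 + x ^ 2) :
    ∫ p, g p.1 * (gaussianPDFReal (m p.2) v p.1 * q p.2) ∂(volume.prod ν)
      = ∫ y, (∫ x, g x * gaussianPDFReal (m y) v x) * q y ∂ν := by
  have hF : Integrable (fun p : ℝ × ℝ => g p.1 * (gaussianPDFReal (m p.2) v p.1 * q p.2))
      (volume.prod ν) := by
    refine (integrable_one_add_sq_mul_gaussianPDFReal_prod hv hm hq hq_nonneg hint).mono
      (by fun_prop) (ae_of_all _ fun p => ?_)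
    have hpdf : 0 ≤ gaussianPDFReal (m p.2) v p.1 * q p.2 :=
      mul_nonneg (gaussianPDFReal_nonneg _ _ _) (hq_nonneg _)
    simp only [Real.norm_eq_abs, abs_mul _ (gaussianPDFReal _ _ _ * _), abs_of_nonneg hpdf,
      abs_of_nonneg (by positivity : (0 : ℝ) ≤ 1 + p.1 ^ 2)]
    exact mul_le_mul_of_nonneg_right (hg_le _) hpdf
  simp_rw [integral_prod_symm _ hF, ← mul_assoc, integral_mul_const]

end ConditionalFubini

lemma abs_le_one_add_sq (x : ℝ) : |x| ≤ 1 + x ^ 2 := by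
  nlinarith [sq_nonneg (|x| - 1), sq_abs x]

section Bivariate

lemma sub_sq_div_pos {A B c : ℝ} (hB : 0 < B) (hdet : c ^ 2 < A * B) : 0 < A - c ^ 2 / B := by
  rw [sub_pos, div_lt_iff₀ hB]
  exact hdet

lemma gaussDensity_fin_two_eq_mul {A B c : ℝ} (hB : 0 < B) (hdet : c ^ 2 < A * B)
    (mx my x y : ℝ) :
    gaussDensity ![mx, my] !![A, c; c, B] ![x, y]
      = gaussianPDFReal (mx + c / B * (y - my)) (A - c ^ 2 / B).toNNReal x
        * gaussianPDFReal my B.toNNReal y := by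
  have hτ := sub_sq_div_pos hB hdet
  have hdetS : (!![A, c; c, B] : Matrix (Fin 2) (Fin 2) ℝ).det = A * B - c ^ 2 := by
    rw [Matrix.det_fin_two_of]
    ring
  have hquad : (![x, y] - ![mx, my]) ⬝ᵥ ((!![A, c; c, B] : Matrix (Fin 2) (Fin 2) ℝ)⁻¹ *ᵥ
      (![x, y] - ![mx, my]))
      = (B * (x - mx) ^ 2 - 2 * c * (x - mx) * (y - my) + A * (y - my) ^ 2) / (A * B - c ^ 2) := by
    rw [Matrix.inv_def, hdetS, Matrix.adjugate_fin_two_of, Ring.inverse_eq_inv]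
    simp only [dotProduct, mulVec, Pi.sub_apply, Matrix.smul_apply, of_apply, cons_val',
      cons_val_fin_one, smul_eq_mul, Fin.sum_univ_two, cons_val_zero, cons_val_one]
    field_simp
    ring
  rw [gaussDensity, hdetS, hquad, gaussianPDFReal, gaussianPDFReal, Real.coe_toNNReal _ hτ.le,
    Real.coe_toNNReal _ hB.le, mul_mul_mul_comm, ← mul_inv, ← Real.sqrt_mul (by positivity),
    ← Real.exp_add]
  congr 3
  · norm_num
    field_simp
  · rw [show A - c ^ 2 / B = (A * B - c ^ 2) / B by field_simp]
    -- `field_simp` normalizes the determinant to this form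
    have hD : B * A - c ^ 2 ≠ 0 := by linarith
    field_simp
    ring

variable {A s c : ℝ} (mx my a : ℝ)

lemma setIntegral_univ_prod_Iic_mul_gaussDensity (hs : 0 < s) (hdet : c ^ 2 < A * s ^ 2)
    {g : ℝ → ℝ} (hg : Measurable g) (hg_le : ∀ x, |g x| ≤ 1 + x ^ 2) :
    ∫ p in (univ ×ˢ Iic a : Set (ℝ × ℝ)),
        g p.1 * gaussDensity ![mx, my] !![A, c; c, s ^ 2] ![p.1, p.2]
      = ∫ y in Iic a, (∫ x, g x * gaussianPDFReal (mx + c / s ^ 2 * (y - my))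
            (A - c ^ 2 / s ^ 2).toNNReal x) * gaussianPDFReal my (s ^ 2).toNNReal y := by
  have hv : (A - c ^ 2 / s ^ 2).toNNReal ≠ 0 := by
    simpa using sub_sq_div_pos (by positivity) hdet
  have hint : IntegrableOn (fun y => (1 + (A - c ^ 2 / s ^ 2).toNNReal
      + (mx + c / s ^ 2 * (y - my)) ^ 2) * gaussianPDFReal my (s ^ 2).toNNReal y) (Iic a) :=
    (integrable_quadratic_mul_gaussianPDFReal (μ := my) (v := (s ^ 2).toNNReal)
      (1 + (A - c ^ 2 / s ^ 2).toNNReal + mx ^ 2) (2 * mx * (c / s ^ 2))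
      ((c / s ^ 2) ^ 2)).integrableOn.congr_fun (fun y _ => by ring) measurableSet_Iic
  simp_rw [gaussDensity_fin_two_eq_mul (by positivity) hdet]
  rw [Measure.volume_eq_prod, ← Measure.prod_restrict, Measure.restrict_univ]
  exact integral_prod_mul_gaussianPDFReal hv (by fun_prop) (measurable_gaussianPDFReal _ _)
    (gaussianPDFReal_nonneg _ _) hint hg hg_le

lemma setIntegral_univ_prod_Iic_fst_mul_gaussDensity (hs : 0 < s) (hdet : c ^ 2 < A * s ^ 2) :
    ∫ p in (univ ×ˢ Iic a : Set (ℝ × ℝ)),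
        p.1 * gaussDensity ![mx, my] !![A, c; c, s ^ 2] ![p.1, p.2]
      = mx * stdCdf ((a - my) / s) - c / s * stdPdf ((a - my) / s) := by
  have hv : (A - c ^ 2 / s ^ 2).toNNReal ≠ 0 := by
    simpa using sub_sq_div_pos (by positivity) hdet
  calc
    _ = ∫ y in Iic a, (mx + c / s ^ 2 * (y - my) + 0 * (y - my) ^ 2)
        * gaussianPDFReal my (s ^ 2).toNNReal y := by
      refine (setIntegral_univ_prod_Iic_mul_gaussDensity mx my a hs hdet (g := fun x => x)
        measurable_id abs_le_one_add_sq).trans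
        (setIntegral_congr_fun measurableSet_Iic fun y _ => ?_)
      rw [integral_mul_gaussianPDFReal hv]
      ring
    _ = _ := by
      rw [setIntegral_quadratic_mul_gaussianPDFReal_Iic_eq_std hs]
      field_simp
      ring

lemma setIntegral_univ_prod_Iic_fst_sq_mul_gaussDensity (hs : 0 < s)
    (hdet : c ^ 2 < A * s ^ 2) :
    ∫ p in (univ ×ˢ Iic a : Set (ℝ × ℝ)),
        p.1 ^ 2 * gaussDensity ![mx, my] !![A, c; c, s ^ 2] ![p.1, p.2]
      = (A + mx ^ 2) * stdCdf ((a - my) / s)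
        - (2 * mx * c / s + c ^ 2 / s ^ 2 * ((a - my) / s)) * stdPdf ((a - my) / s) := by
  have hτ := sub_sq_div_pos (by positivity) hdet
  have hv : (A - c ^ 2 / s ^ 2).toNNReal ≠ 0 := by simpa using hτ
  have hsq : ∀ x : ℝ, |x ^ 2| ≤ 1 + x ^ 2 := fun x => by
    rw [abs_of_nonneg (sq_nonneg x)]
    linarith
  calc
    _ = ∫ y in Iic a, ((A - c ^ 2 / s ^ 2 + mx ^ 2) + 2 * mx * (c / s ^ 2) * (y - my)
        + (c / s ^ 2) ^ 2 * (y - my) ^ 2) * gaussianPDFReal my (s ^ 2).toNNReal y := by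
      refine (setIntegral_univ_prod_Iic_mul_gaussDensity mx my a hs hdet (g := fun x => x ^ 2)
        (by fun_prop) hsq).trans (setIntegral_congr_fun measurableSet_Iic fun y _ => ?_)
      rw [integral_sq_mul_gaussianPDFReal hv, Real.coe_toNNReal _ hτ.le]
      ring
    _ = _ := by
      rw [setIntegral_quadratic_mul_gaussianPDFReal_Iic_eq_std hs]
      field_simp
      ring

end Bivariate

theorem bivariate_censored_conditional_variance_lower_general
    (mx my σx sy c : ℝ) (hsy : 0 < sy) (hc : c ^ 2 < σx ^ 2 * sy ^ 2)
    (f : ℝ → ℝ → ℝ)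
    (hf : ∀ x y, f x y = gaussDensity ![mx, my] !![σx ^ 2, c; c, sy ^ 2] ![x, y])
    (a astar lam μhat : ℝ)
    (hastar : astar = (a - my) / sy)
    (hlam : lam = stdPdf astar / stdCdf astar)
    (hμhat : μhat = (stdCdf astar)⁻¹ *
      ∫ p in (Set.univ ×ˢ Set.Iic a : Set (ℝ × ℝ)), p.1 * f p.1 p.2) :
    (stdCdf astar)⁻¹ *
        (∫ p in (Set.univ ×ˢ Set.Iic a : Set (ℝ × ℝ)), p.1 ^ 2 * f p.1 p.2)
      - μhat ^ 2
      = σx ^ 2 - (c ^ 2 / sy ^ 2) * (astar * lam + lam ^ 2) := by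
  simp_rw [hf] at hμhat ⊢
  rw [setIntegral_univ_prod_Iic_fst_mul_gaussDensity mx my a hsy hc, ← hastar] at hμhat
  rw [setIntegral_univ_prod_Iic_fst_sq_mul_gaussDensity mx my a hsy hc, ← hastar, hμhat, hlam]
  have hΦ := stdCdf_pos astar
  field_simp
  ring

theorem bivariate_censored_conditional_variance_lower
    (mx my σx sy c : ℝ) (hσx : 0 < σx) (hsy : 0 < sy) (hc : c ^ 2 < σx ^ 2 * sy ^ 2)
    (f : ℝ → ℝ → ℝ)
    (hf : ∀ x y, f x y = gaussDensity ![mx, my] !![σx ^ 2, c; c, sy ^ 2] ![x, y])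
    (a astar lam μhat : ℝ)
    (hastar : astar = (a - my) / sy)
    (hlam : lam = stdPdf astar / stdCdf astar)
    (hμhat : μhat = (stdCdf astar)⁻¹ *
      ∫ p in (Set.univ ×ˢ Set.Iic a : Set (ℝ × ℝ)), p.1 * f p.1 p.2) :
    (stdCdf astar)⁻¹ *
        (∫ p in (Set.univ ×ˢ Set.Iic a : Set (ℝ × ℝ)), p.1 ^ 2 * f p.1 p.2)
      - μhat ^ 2
      = σx ^ 2 - (c ^ 2 / sy ^ 2) * (astar * lam + lam ^ 2) :=
  bivariate_censored_conditional_variance_lower_general mx my σx sy c hsy hc f hf a astar lam μhat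
    hastar hlam hμhat
end

section
/- Let m_x, m_y ∈ ℝ, σ_x > 0, s_y > 0 and c ∈ ℝ with c² < σ_x² s_y², and let f be the bivariate Gaussian density on ℝ² with mean (m_x, m_y) and covariance matrix [[σ_x², c],[c, s_y²]]. Fix b ∈ ℝ, set b* = (b − m_y)/s_y and λ = φ(b*)/(1 − Φ(b*)), and let μ̂ = (1/(1 − Φ(b*))) ∫_{ℝ×[b,∞)} x f(x,y) d(x,y). Then (1/(1 − Φ(b*))) ∫_{ℝ×[b,∞)} x² f(x,y) d(x,y) − μ̂² = σ_x² − (c²/s_y²)·λ·(λ − b*); that is, the conditional variance of X given Y ≥ b equals σ_x² − (c²/s_y²)·(φ(b*)/(1−Φ(b*)))·(φ(b*)/(1−Φ(b*)) − b*). -/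
open MeasureTheory Real Matrix

/-!
Completing the square in `x` factors the joint density as the `𝒩(m_y, s_y²)` density of `y`
times the `𝒩(m_x + ρ (y - m_y), τ²)` density of `x`, where `ρ = c / s_y²` and
`τ² = σ_x² - c² / s_y²`.
By Fubini the censored first and second moments of `x` become integrals over `y > b` of a
quadratic in `y` against a normal density. After standardizing, these are integrals of
`(A + B u + C u²) φ(u)`, which equals `(A + C) φ(u)` plus the derivative of `-(B + C u) φ(u)`
because `φ'(u) = -u φ(u)`; so they are explicit in `φ(b*)` and `1 - Φ(b*)`.
-/

open Set Filter Topology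

@[fun_prop] lemma continuous_stdPdf : Continuous stdPdf := by unfold stdPdf; fun_prop

lemma stdPdf_pos (t : ℝ) : 0 < stdPdf t := by unfold stdPdf; positivity

lemma stdPdf_eq_mul_exp (t : ℝ) :
    stdPdf t = (√(2 * π))⁻¹ * rexp (-(1 / 2) * t ^ 2) := by
  unfold stdPdf; ring_nf

lemma hasDerivAt_stdPdf (t : ℝ) : HasDerivAt stdPdf (-t * stdPdf t) t := by
  have h : HasDerivAt (fun t : ℝ => -t ^ 2 / 2) (-t) t := by
    simpa using ((hasDerivAt_pow 2 t).neg.div_const 2).congr_deriv (by ring)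
  exact (h.exp.const_mul _).congr_deriv (by rw [stdPdf]; ring)

lemma integrable_pow_mul_stdPdf (n : ℕ) : Integrable fun u : ℝ => u ^ n * stdPdf u := by
  have h := (integrable_rpow_mul_exp_neg_mul_sq (b := 1 / 2) (by norm_num)
    (s := n) (by linarith [n.cast_nonneg (α := ℝ)])).const_mul (√(2 * π))⁻¹
  refine h.congr (ae_of_all _ fun u => ?_)
  simp only [rpow_natCast, stdPdf_eq_mul_exp]; ring

lemma integrable_stdPdf : Integrable stdPdf := by
  simpa using integrable_pow_mul_stdPdf 0

lemma tendsto_pow_mul_stdPdf_cocompact (n : ℕ) :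
    Tendsto (fun u : ℝ => u ^ n * stdPdf u) (cocompact ℝ) (𝓝 0) := by
  rw [tendsto_zero_iff_norm_tendsto_zero]
  have h := (tendsto_rpow_abs_mul_exp_neg_mul_sq_cocompact (a := 1 / 2) (by norm_num) n).const_mul
    (√(2 * π))⁻¹
  rw [mul_zero] at h
  refine h.congr fun u => ?_
  rw [norm_mul, norm_pow, Real.norm_eq_abs, Real.norm_of_nonneg (stdPdf_pos u).le, rpow_natCast,
    stdPdf_eq_mul_exp]
  ring

lemma integral_stdPdf : ∫ u, stdPdf u = 1 := by
  simp_rw [stdPdf_eq_mul_exp, integral_const_mul, integral_gaussian]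
  rw [show π / (1 / 2) = 2 * π by ring, inv_mul_cancel₀ (by positivity)]

lemma integral_Ioi_stdPdf (a : ℝ) : ∫ u in Ioi a, stdPdf u = 1 - stdCdf a := by
  have h := integral_add_compl (measurableSet_Iic (a := a)) integrable_stdPdf
  rw [compl_Iic, integral_stdPdf] at h
  rw [stdCdf]; linarith

lemma one_sub_stdCdf_pos (a : ℝ) : 0 < 1 - stdCdf a := by
  rw [← integral_Ioi_stdPdf]
  have hsupp : Function.support stdPdf = univ := eq_univ_of_forall fun t => (stdPdf_pos t).ne'
  refine (setIntegral_pos_iff_support_of_nonneg_ae (ae_of_all _ fun t => (stdPdf_pos t).le)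
    integrable_stdPdf.integrableOn).2 ?_
  simp [hsupp]

lemma integrable_quadratic_mul_stdPdf (A B C : ℝ) :
    Integrable fun u : ℝ => (A + B * u + C * u ^ 2) * stdPdf u := by
  refine ((((integrable_pow_mul_stdPdf 0).const_mul A).add
    ((integrable_pow_mul_stdPdf 1).const_mul B)).add
    ((integrable_pow_mul_stdPdf 2).const_mul C)).congr (ae_of_all _ fun u => ?_)
  simp only [Pi.add_apply]; ring

lemma hasDerivAt_linear_mul_stdPdf (A B C u : ℝ) :
    HasDerivAt (fun u => -((B + C * u) * stdPdf u))
      ((A + B * u + C * u ^ 2) * stdPdf u - (A + C) * stdPdf u) u := by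
  have h := (((hasDerivAt_id u).const_mul C).const_add B).mul (hasDerivAt_stdPdf u)
  exact h.neg.congr_deriv (by simp only [id]; ring)

lemma tendsto_linear_mul_stdPdf_cocompact (B C : ℝ) :
    Tendsto (fun u => (B + C * u) * stdPdf u) (cocompact ℝ) (𝓝 0) := by
  have h := ((tendsto_pow_mul_stdPdf_cocompact 0).const_mul B).add
    ((tendsto_pow_mul_stdPdf_cocompact 1).const_mul C)
  rw [mul_zero, mul_zero, add_zero] at h
  exact h.congr fun u => by ring

lemma integral_quadratic_mul_stdPdf (A B C : ℝ) :
    ∫ u, (A + B * u + C * u ^ 2) * stdPdf u = A + C := by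
  have hG (l : Filter ℝ) (hl : l ≤ cocompact ℝ) :
      Tendsto (fun u => -((B + C * u) * stdPdf u)) l (𝓝 0) := by
    simpa using (tendsto_linear_mul_stdPdf_cocompact B C).neg.mono_left hl
  have hint0 := integrable_stdPdf.const_mul (A + C)
  have h := integral_of_hasDerivAt_of_tendsto (hasDerivAt_linear_mul_stdPdf A B C)
    ((integrable_quadratic_mul_stdPdf A B C).sub hint0)
    (hG _ atBot_le_cocompact) (hG _ atTop_le_cocompact)
  rw [integral_sub (integrable_quadratic_mul_stdPdf A B C) hint0, integral_const_mul,
    integral_stdPdf] at h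
  linarith

lemma integral_Ioi_quadratic_mul_stdPdf (A B C a : ℝ) :
    ∫ u in Ioi a, (A + B * u + C * u ^ 2) * stdPdf u
      = (A + C) * (1 - stdCdf a) + (B + C * a) * stdPdf a := by
  have hint0 := integrable_stdPdf.const_mul (A + C)
  have h := integral_Ioi_of_hasDerivAt_of_tendsto' (a := a) (m := 0)
    (fun u _ => hasDerivAt_linear_mul_stdPdf A B C u)
    ((integrable_quadratic_mul_stdPdf A B C).sub hint0).integrableOn
    (by simpa using (tendsto_linear_mul_stdPdf_cocompact B C).neg.mono_left atTop_le_cocompact)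
  rw [integral_sub (integrable_quadratic_mul_stdPdf A B C).integrableOn hint0.integrableOn,
    integral_const_mul, integral_Ioi_stdPdf] at h
  linarith

lemma integral_comp_sub_div (g : ℝ → ℝ) (m : ℝ) {s : ℝ} (hs : 0 < s) :
    ∫ x, g ((x - m) / s) = s * ∫ u, g u := by
  rw [integral_sub_right_eq_self (fun t => g (t / s)) m, Measure.integral_comp_div g s,
    abs_of_pos hs, smul_eq_mul]

lemma setIntegral_Ioi_comp_sub_div (g : ℝ → ℝ) (a m : ℝ) {s : ℝ} (hs : 0 < s) :
    ∫ x in Ioi a, g ((x - m) / s) = s * ∫ u in Ioi ((a - m) / s), g u := by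
  have hshift := (measurePreserving_sub_right volume m).setIntegral_preimage_emb
    (measurableEmbedding_subRight m) (fun t => g (s⁻¹ * t)) (Ioi (a - m))
  rw [preimage_sub_const_Ioi, sub_add_cancel] at hshift
  simp_rw [div_eq_inv_mul, hshift]
  rw [integral_comp_mul_left_Ioi g _ (inv_pos.2 hs), inv_inv, smul_eq_mul]

lemma MeasureTheory.Integrable.comp_sub_div {g : ℝ → ℝ} (hg : Integrable g) (m : ℝ)
    {s : ℝ} (hs : s ≠ 0) : Integrable fun x => g ((x - m) / s) := by
  simpa [div_eq_mul_inv] using (hg.comp_mul_right' (inv_ne_zero hs)).comp_sub_right m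

/-- The density of `𝒩(m, s²)`; `s` is the standard deviation. -/
noncomputable def normalPdf (m s x : ℝ) : ℝ := s⁻¹ * stdPdf ((x - m) / s)

lemma normalPdf_nonneg (m : ℝ) {s : ℝ} (hs : 0 ≤ s) (x : ℝ) : 0 ≤ normalPdf m s x :=
  mul_nonneg (inv_nonneg.2 hs) (stdPdf_pos _).le

lemma quadratic_mul_normalPdf (A B C m : ℝ) {s : ℝ} (hs : s ≠ 0) (x : ℝ) :
    (A + B * (x - m) + C * (x - m) ^ 2) * normalPdf m s x
      = s⁻¹ * ((A + B * s * ((x - m) / s) + C * s ^ 2 * ((x - m) / s) ^ 2)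
          * stdPdf ((x - m) / s)) := by
  rw [normalPdf]; field_simp

lemma integrable_quadratic_mul_normalPdf (A B C m : ℝ) {s : ℝ} (hs : s ≠ 0) :
    Integrable fun x => (A + B * (x - m) + C * (x - m) ^ 2) * normalPdf m s x := by
  simp_rw [quadratic_mul_normalPdf A B C m hs]
  exact (((integrable_quadratic_mul_stdPdf _ _ _).const_mul s⁻¹).comp_sub_div m hs)

lemma integral_quadratic_mul_normalPdf (A B C m : ℝ) {s : ℝ} (hs : 0 < s) :
    ∫ x, (A + B * (x - m) + C * (x - m) ^ 2) * normalPdf m s x = A + C * s ^ 2 := by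
  simp_rw [quadratic_mul_normalPdf A B C m hs.ne']
  rw [integral_comp_sub_div
      (fun u => s⁻¹ * ((A + B * s * u + C * s ^ 2 * u ^ 2) * stdPdf u)) m hs,
    integral_const_mul, integral_quadratic_mul_stdPdf]
  field_simp

lemma integral_Ioi_quadratic_mul_normalPdf (A B C m a : ℝ) {s : ℝ} (hs : 0 < s) :
    ∫ x in Ioi a, (A + B * (x - m) + C * (x - m) ^ 2) * normalPdf m s x
      = (A + C * s ^ 2) * (1 - stdCdf ((a - m) / s))
        + (B * s + C * s ^ 2 * ((a - m) / s)) * stdPdf ((a - m) / s) := by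
  simp_rw [quadratic_mul_normalPdf A B C m hs.ne']
  rw [setIntegral_Ioi_comp_sub_div
      (fun u => s⁻¹ * ((A + B * s * u + C * s ^ 2 * u ^ 2) * stdPdf u)) a m hs,
    integral_const_mul, integral_Ioi_quadratic_mul_stdPdf]
  field_simp

lemma integral_mul_normalPdf (m : ℝ) {s : ℝ} (hs : 0 < s) :
    ∫ x, x * normalPdf m s x = m := by
  simpa using integral_quadratic_mul_normalPdf m 1 0 m hs

lemma integral_sq_mul_normalPdf (m : ℝ) {s : ℝ} (hs : 0 < s) :
    ∫ x, x ^ 2 * normalPdf m s x = s ^ 2 + m ^ 2 := by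
  have h := integral_quadratic_mul_normalPdf (m ^ 2) (2 * m) 1 m hs
  simp_rw [show ∀ x, m ^ 2 + 2 * m * (x - m) + 1 * (x - m) ^ 2 = x ^ 2 from fun x => by ring]
    at h
  linarith

/-- The density at `p = (x, y)` of `(X, Y)` with `Y ∼ 𝒩(m, s²)` and
`X ∣ Y = y ∼ 𝒩(a + ρ (y - m), τ²)`. -/
noncomputable def regressionPdf (a ρ τ m s : ℝ) (p : ℝ × ℝ) : ℝ :=
  normalPdf (a + ρ * (p.2 - m)) τ p.1 * normalPdf m s p.2

section regressionPdf

variable (a ρ m : ℝ) {τ s : ℝ}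

lemma continuous_regressionPdf : Continuous (regressionPdf a ρ τ m s) := by
  unfold regressionPdf normalPdf; fun_prop

lemma regressionPdf_nonneg (hτ : 0 ≤ τ) (hs : 0 ≤ s) (p : ℝ × ℝ) :
    0 ≤ regressionPdf a ρ τ m s p :=
  mul_nonneg (normalPdf_nonneg _ hτ _) (normalPdf_nonneg _ hs _)

lemma integrable_one_add_sq_mul_regressionPdf (hτ : 0 < τ) (hs : 0 < s) :
    Integrable fun p : ℝ × ℝ => (1 + p.1 ^ 2) * regressionPdf a ρ τ m s p := by
  have hD := continuous_regressionPdf a ρ m (τ := τ) (s := s)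
  have hsection (y : ℝ) : (fun x => (1 + x ^ 2) * regressionPdf a ρ τ m s (x, y))
      = fun x => ((1 + (a + ρ * (y - m)) ^ 2) + 2 * (a + ρ * (y - m)) * (x - (a + ρ * (y - m)))
          + 1 * (x - (a + ρ * (y - m))) ^ 2) * normalPdf (a + ρ * (y - m)) τ x
          * normalPdf m s y := by
    ext x; simp only [regressionPdf]; ring
  have hnorm (y : ℝ) : ∫ x, ‖(1 + x ^ 2) * regressionPdf a ρ τ m s (x, y)‖
      = ((1 + a ^ 2 + τ ^ 2) + 2 * a * ρ * (y - m) + ρ ^ 2 * (y - m) ^ 2) * normalPdf m s y := by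
    have habs (x : ℝ) : ‖(1 + x ^ 2) * regressionPdf a ρ τ m s (x, y)‖
        = (1 + x ^ 2) * regressionPdf a ρ τ m s (x, y) :=
      Real.norm_of_nonneg (mul_nonneg (by positivity) (regressionPdf_nonneg a ρ m hτ.le hs.le _))
    simp_rw [habs]
    rw [hsection, integral_mul_const, integral_quadratic_mul_normalPdf _ _ _ _ hτ]
    ring
  rw [Measure.volume_eq_prod, integrable_prod_iff' (by fun_prop)]
  refine ⟨ae_of_all _ fun y => ?_, ?_⟩
  · rw [hsection]
    exact (integrable_quadratic_mul_normalPdf _ _ _ _ hτ.ne').mul_const _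
  · simp_rw [hnorm]
    exact integrable_quadratic_mul_normalPdf _ _ _ _ hs.ne'

lemma integrable_mul_regressionPdf {g : ℝ → ℝ} (hg : Continuous g)
    (hg_le : ∀ x, |g x| ≤ 1 + x ^ 2) (hτ : 0 < τ) (hs : 0 < s) :
    Integrable fun p : ℝ × ℝ => g p.1 * regressionPdf a ρ τ m s p := by
  have hnonneg := regressionPdf_nonneg a ρ m hτ.le hs.le
  have hD := continuous_regressionPdf a ρ m (τ := τ) (s := s)
  refine (integrable_one_add_sq_mul_regressionPdf a ρ m hτ hs).mono' (by fun_prop)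
    (ae_of_all _ fun p => ?_)
  rw [norm_mul, Real.norm_eq_abs, Real.norm_of_nonneg (hnonneg p)]
  exact mul_le_mul_of_nonneg_right (hg_le _) (hnonneg p)

lemma setIntegral_univ_prod_Ici_mul_regressionPdf (g : ℝ → ℝ) (b : ℝ)
    (hg : Integrable fun p : ℝ × ℝ => g p.1 * regressionPdf a ρ τ m s p) :
    ∫ p in univ ×ˢ Ici b, g p.1 * regressionPdf a ρ τ m s p
      = ∫ y in Ioi b, (∫ x, g x * normalPdf (a + ρ * (y - m)) τ x) * normalPdf m s y := by
  have hrestrict : (volume : Measure (ℝ × ℝ)).restrict (univ ×ˢ Ici b)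
      = (volume : Measure ℝ).prod (volume.restrict (Ici b)) := by
    rw [Measure.volume_eq_prod, ← Measure.prod_restrict, Measure.restrict_univ]
  rw [hrestrict, integral_prod_symm _ (by rw [← hrestrict]; exact hg.restrict),
    integral_Ici_eq_integral_Ioi]
  simp_rw [regressionPdf, ← mul_assoc, integral_mul_const]

lemma setIntegral_univ_prod_Ici_fst_mul_regressionPdf (b : ℝ) (hτ : 0 < τ) (hs : 0 < s) :
    ∫ p in univ ×ˢ Ici b, p.1 * regressionPdf a ρ τ m s p
      = a * (1 - stdCdf ((b - m) / s)) + ρ * s * stdPdf ((b - m) / s) := by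
  have hg_le (x : ℝ) : |x| ≤ 1 + x ^ 2 := by nlinarith [sq_abs x, sq_nonneg (|x| - 1)]
  rw [setIntegral_univ_prod_Ici_mul_regressionPdf a ρ m (fun x => x) b
    (integrable_mul_regressionPdf a ρ m continuous_id' hg_le hτ hs)]
  simp_rw [integral_mul_normalPdf _ hτ]
  simpa using integral_Ioi_quadratic_mul_normalPdf a ρ 0 m b hs

lemma setIntegral_univ_prod_Ici_fst_sq_mul_regressionPdf (b : ℝ) (hτ : 0 < τ) (hs : 0 < s) :
    ∫ p in univ ×ˢ Ici b, p.1 ^ 2 * regressionPdf a ρ τ m s p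
      = (τ ^ 2 + a ^ 2 + ρ ^ 2 * s ^ 2) * (1 - stdCdf ((b - m) / s))
        + (2 * a * ρ * s + ρ ^ 2 * s ^ 2 * ((b - m) / s)) * stdPdf ((b - m) / s) := by
  have hg_le (x : ℝ) : |x ^ 2| ≤ 1 + x ^ 2 := by rw [abs_of_nonneg (sq_nonneg x)]; linarith
  rw [setIntegral_univ_prod_Ici_mul_regressionPdf a ρ m _ b
    (integrable_mul_regressionPdf a ρ m (continuous_pow 2) hg_le hτ hs)]
  simp_rw [integral_sq_mul_normalPdf _ hτ]
  have h := integral_Ioi_quadratic_mul_normalPdf (τ ^ 2 + a ^ 2) (2 * a * ρ) (ρ ^ 2) m b hs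
  simp_rw [show ∀ y, τ ^ 2 + a ^ 2 + 2 * a * ρ * (y - m) + ρ ^ 2 * (y - m) ^ 2
    = τ ^ 2 + (a + ρ * (y - m)) ^ 2 from fun y => by ring] at h
  rw [h]

end regressionPdf

lemma residual_variance_pos {σx sy c : ℝ} (hsy : 0 < sy) (hc : c ^ 2 < σx ^ 2 * sy ^ 2) :
    0 < σx ^ 2 - c ^ 2 / sy ^ 2 := by
  rw [sub_pos, div_lt_iff₀ (by positivity)]; exact hc

lemma dotProduct_inv_mulVec_fin_two (p c q x y : ℝ) :
    ![x, y] ⬝ᵥ (!![p, c; c, q]⁻¹ *ᵥ ![x, y])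
      = (p * q - c ^ 2)⁻¹ * (q * x ^ 2 - 2 * c * x * y + p * y ^ 2) := by
  rw [inv_def, adjugate_fin_two_of, det_fin_two_of, Ring.inverse_eq_inv']
  simp only [dotProduct, mulVec, Matrix.smul_apply, of_apply, cons_val', cons_val_fin_one,
    smul_eq_mul, Fin.sum_univ_two, cons_val_zero, cons_val_one]
  ring

lemma gaussDensity_fin_two_eq_regressionPdf (mx my σx sy c x y : ℝ) (hsy : 0 < sy)
    (hc : c ^ 2 < σx ^ 2 * sy ^ 2) :
    gaussDensity ![mx, my] !![σx ^ 2, c; c, sy ^ 2] ![x, y]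
      = regressionPdf mx (c / sy ^ 2) √(σx ^ 2 - c ^ 2 / sy ^ 2) my sy (x, y) := by
  have hτ2 := residual_variance_pos hsy hc
  set τ := √(σx ^ 2 - c ^ 2 / sy ^ 2)
  have hτ : 0 < τ := sqrt_pos.2 hτ2
  have hσx : σx ^ 2 = τ ^ 2 + c ^ 2 / sy ^ 2 := by rw [sq_sqrt hτ2.le]; ring
  have hdet : σx ^ 2 * sy ^ 2 - c ^ 2 = (τ * sy) ^ 2 := by rw [hσx]; field_simp; ring
  have hexp : -(1 / 2) * ((![x, y] - ![mx, my]) ⬝ᵥ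
        (!![σx ^ 2, c; c, sy ^ 2]⁻¹ *ᵥ (![x, y] - ![mx, my])))
      = -((x - (mx + c / sy ^ 2 * (y - my))) / τ) ^ 2 / 2 + -((y - my) / sy) ^ 2 / 2 := by
    rw [show ![x, y] - ![mx, my] = ![x - mx, y - my] by simp, dotProduct_inv_mulVec_fin_two, hdet,
      hσx]
    field_simp
    ring
  have hconst : √((2 * π) ^ 2 * det !![σx ^ 2, c; c, sy ^ 2])
      = √(2 * π) * τ * (√(2 * π) * sy) := by
    rw [det_fin_two_of, ← sq, hdet, ← mul_pow, sqrt_sq (by positivity)]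
    linear_combination -(τ * sy) * mul_self_sqrt (by positivity : (0 : ℝ) ≤ 2 * π)
  rw [gaussDensity, hexp, hconst, exp_add, regressionPdf, normalPdf, normalPdf, stdPdf, stdPdf]
  ring

theorem bivariate_censored_conditional_variance_upper_general
    (mx my σx sy c : ℝ) (hsy : 0 < sy) (hc : c ^ 2 < σx ^ 2 * sy ^ 2)
    (f : ℝ → ℝ → ℝ)
    (hf : ∀ x y, f x y = gaussDensity ![mx, my] !![σx ^ 2, c; c, sy ^ 2] ![x, y])
    (b bstar lam μhat : ℝ)
    (hbstar : bstar = (b - my) / sy)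
    (hlam : lam = stdPdf bstar / (1 - stdCdf bstar))
    (hμhat : μhat = (1 - stdCdf bstar)⁻¹ *
      ∫ p in (Set.univ ×ˢ Set.Ici b : Set (ℝ × ℝ)), p.1 * f p.1 p.2) :
    (1 - stdCdf bstar)⁻¹ *
        (∫ p in (Set.univ ×ˢ Set.Ici b : Set (ℝ × ℝ)), p.1 ^ 2 * f p.1 p.2)
      - μhat ^ 2
      = σx ^ 2 - (c ^ 2 / sy ^ 2) * lam * (lam - bstar) := by
  have hτ2 := residual_variance_pos hsy hc
  have hf' (p : ℝ × ℝ) :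
      f p.1 p.2 = regressionPdf mx (c / sy ^ 2) √(σx ^ 2 - c ^ 2 / sy ^ 2) my sy p := by
    rw [hf, gaussDensity_fin_two_eq_regressionPdf mx my σx sy c _ _ hsy hc]
  simp_rw [hf'] at hμhat ⊢
  rw [hμhat, setIntegral_univ_prod_Ici_fst_mul_regressionPdf _ _ _ _ (sqrt_pos.2 hτ2) hsy,
    setIntegral_univ_prod_Ici_fst_sq_mul_regressionPdf _ _ _ _ (sqrt_pos.2 hτ2) hsy,
    sq_sqrt hτ2.le, ← hbstar, hlam]
  have hΦ := one_sub_stdCdf_pos bstar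
  field_simp
  ring

theorem bivariate_censored_conditional_variance_upper
    (mx my σx sy c : ℝ) (hσx : 0 < σx) (hsy : 0 < sy) (hc : c ^ 2 < σx ^ 2 * sy ^ 2)
    (f : ℝ → ℝ → ℝ)
    (hf : ∀ x y, f x y = gaussDensity ![mx, my] !![σx ^ 2, c; c, sy ^ 2] ![x, y])
    (b bstar lam μhat : ℝ)
    (hbstar : bstar = (b - my) / sy)
    (hlam : lam = stdPdf bstar / (1 - stdCdf bstar))
    (hμhat : μhat = (1 - stdCdf bstar)⁻¹ *
      ∫ p in (Set.univ ×ˢ Set.Ici b : Set (ℝ × ℝ)), p.1 * f p.1 p.2) :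
    (1 - stdCdf bstar)⁻¹ *
        (∫ p in (Set.univ ×ˢ Set.Ici b : Set (ℝ × ℝ)), p.1 ^ 2 * f p.1 p.2)
      - μhat ^ 2
      = σx ^ 2 - (c ^ 2 / sy ^ 2) * lam * (lam - bstar) :=
  bivariate_censored_conditional_variance_upper_general mx my σx sy c hsy hc f hf b bstar lam μhat
    hbstar hlam hμhat
end
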